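/- Almost-sure liveness-or-exit: assume the LDBSM conditions (a)–(f) hold. Then there exists an automaton-controller π^A such that for every x₀ ∈ Init, d^∞({ω : ℕ → W | (q_t ∈ Acc for infinitely many t) or (there exists t with V^safe(x_t, q_t) ≥ 0)}) = 1, where (x_t, q_t) is the product trajectory from (x₀, q_init) under π^A and ω. -/

import Mathlib

open MeasureTheory

/-- The trajectory of the closed-loop dynamics `F` from initial state `x₀`
under the disturbance sequence `ω`. -/
def traj {X W : Type*} (F : X × W → X) (x₀ : X) (ω : ℕ → W) : ℕ → X
  | 0 => x₀
  | t + 1 => F (traj F x₀ ω t, ω t)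

/-- Büchi acceptance of an infinite word `σ` by the automaton
`(Q, qinit, Δ, Acc)`. -/
def Accepts {Q A : Type*} (qinit : Q) (Δ : Q → A → Set Q) (Acc : Set Q)
    (σ : ℕ → A) : Prop :=
  ∃ ρ : ℕ → Q, ρ 0 = qinit ∧ (∀ t, ρ (t + 1) ∈ Δ (ρ t) (σ t)) ∧
    {t | ρ t ∈ Acc}.Infinite

/-- The product trajectory `(x_t, q_t)` from `(x₀, qinit)` under the
automaton-controller `πA` and disturbance sequence `ω`. -/
def prodTraj {X W Q : Type*} (F : X × W → X) (πA : X × Q → Q)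
    (x₀ : X) (qinit : Q) (ω : ℕ → W) : ℕ → X × Q
  | 0 => (x₀, qinit)
  | t + 1 =>
      (F ((prodTraj F πA x₀ qinit ω t).1, ω t), πA (prodTraj F πA x₀ qinit ω t))

/-- The set of rejecting states: automaton states from which no accepting
state is reachable in the graph induced by the transitions. -/
def Qreject {Q A : Type*} (Δ : Q → A → Set Q) (Acc : Set Q) : Set Q :=
  {q | ∀ q', Relation.ReflTransGen (fun a b => ∃ σ : A, b ∈ Δ a σ) q q' → q' ∉ Acc}

/-- The safety condition `SafetyCond(x, q, σ, q')`: the letter `σ` holds at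
`x`; the successor stays in the invariant `I` for every disturbance; the
expected value of `Vsafe` strictly decreases by at least `εS`; and the change
of `Vsafe` lies in the interval `[βS, βS + MS]` for every disturbance. -/
def SafetyCond {X W Q A : Type*} [MeasurableSpace W]
    (d : Measure W) (F : X × W → X) (L : X → A) (I : Set (X × Q))
    (Vsafe : X × Q → ℝ) (εS MS βS : ℝ) (x : X) (q : Q) (σ : A) (q' : Q) :
    Prop :=
  L x = σ ∧ (∀ w, (F (x, w), q') ∈ I) ∧
    (∫ w, Vsafe (F (x, w), q') ∂d) ≤ Vsafe (x, q) - εS ∧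
    ∀ w, βS ≤ Vsafe (x, q) - Vsafe (F (x, w), q') ∧
      Vsafe (x, q) - Vsafe (F (x, w), q') ≤ βS + MS

open ProbabilityTheory Set
open scoped ENNReal

/-!
Choose the controller measurably so that, from every state of `I` with `V^safe < 0`, it moves to a
successor witnessing (e) or (f); by (c) such states are not rejecting, so a witness exists. Along
the product chain, `V^live` then drops in expectation by `ε^L` at non-accepting states of this
region and rises by at most `M^L` at accepting ones. For fixed `N`, the expectation of `V^live`
over the paths that stayed in the region up to time `t` and avoided `Acc` from `N` on is finite
at time `N` and afterwards decreases by `ε^L` times the probability of staying in the region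
forever while avoiding `Acc`, so that probability is zero. The chain leaves `I` from the region
only with probability zero, so almost surely either `V^safe ≥ 0` at some time or `Acc` recurs.
-/

theorem eq_infinitePi_of_forall_range {W : Type*} [MeasurableSpace W] (d : Measure W)
    [IsProbabilityMeasure d] {μ : Measure (ℕ → W)}
    (hμ : ∀ (n : ℕ) (s : ℕ → Set W), (∀ i, MeasurableSet (s i)) →
      μ {ω | ∀ i < n, ω i ∈ s i} = ∏ i ∈ Finset.range n, d (s i)) :
    μ = Measure.infinitePi (fun _ : ℕ => d) := by
  refine Measure.eq_infinitePi _ fun s t ht => ?_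
  obtain ⟨n, hsn⟩ := Finset.exists_nat_subset_range s
  have hpi : Set.pi s t = {ω | ∀ i < n, ω i ∈ if i ∈ s then t i else univ} := by
    ext ω
    simp only [Set.mem_pi, Finset.mem_coe, Set.mem_ofPred_eq]
    refine ⟨fun h i _ => ?_, fun h i hi => ?_⟩
    · split_ifs with hi
      exacts [h i hi, mem_univ _]
    · simpa [hi] using h i (Finset.mem_range.1 (hsn hi))
  rw [hpi, hμ n _ fun i => by split_ifs <;> simp [ht]]
  simp_rw [apply_ite d, measure_univ, Finset.prod_ite_mem, Finset.inter_eq_right.2 hsn]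

theorem lintegral_infinitePi_eval_of_dependsOn {W : Type*} [MeasurableSpace W] (d : Measure W)
    [IsProbabilityMeasure d] {t : ℕ} {h : (ℕ → W) → W → ℝ≥0∞}
    (hh : Measurable (Function.uncurry h)) (hdep : DependsOn h (Iio t)) :
    ∫⁻ ω, h ω (ω t) ∂Measure.infinitePi (fun _ => d)
      = ∫⁻ ω, ∫⁻ w, h ω w ∂d ∂Measure.infinitePi (fun _ => d) := by
  set P := Measure.infinitePi (fun _ : ℕ => d)
  have : Nonempty W := nonempty_of_isProbabilityMeasure d
  let r := (Finset.range t).restrict (π := fun _ => W)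
  -- `h` factors through the first `t` coordinates, filled up arbitrarily beyond them.
  let H : (Finset.range t → W) × W → ℝ≥0∞ :=
    fun z => h (Function.updateFinset (fun _ => Classical.arbitrary W) _ z.1) z.2
  have hHr : ∀ ω w, H (r ω, w) = h ω w := fun ω w =>
    congrFun (hdep fun i hi => by simp [Function.updateFinset, r, Finset.mem_range.2 hi]) w
  have hH : Measurable H :=
    hh.comp ((measurable_updateFinset.comp measurable_fst).prodMk measurable_snd)
  have hr : Measurable r := Finset.measurable_restrict _
  have hind : IndepFun r (fun ω => ω t) P := by
    have := (iIndepFun_infinitePi (P := fun _ : ℕ => d) (X := fun _ => id) fun _ => measurable_id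
      ).indepFun_finset (Finset.range t) {t} (by simp) fun i => measurable_pi_apply i
    exact this.comp measurable_id (measurable_pi_apply ⟨t, Finset.mem_singleton_self t⟩)
  calc ∫⁻ ω, h ω (ω t) ∂P = ∫⁻ ω, H (r ω, ω t) ∂P := by simp only [hHr]
    _ = ∫⁻ z, H z ∂((P.map r).prod d) := by
      rw [← Measure.infinitePi_map_eval (fun _ : ℕ => d) t, ← hind.map_prod_eq_prod_map_map
        hr.aemeasurable (measurable_pi_apply t).aemeasurable, lintegral_map hH (by fun_prop)]
    _ = ∫⁻ ω, ∫⁻ w, H (r ω, w) ∂d ∂P := by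
      rw [lintegral_prod _ hH.aemeasurable, lintegral_map hH.lintegral_prod_right' hr]
    _ = ∫⁻ ω, ∫⁻ w, h ω w ∂d ∂P := by simp only [hHr]

theorem ENNReal.eq_zero_of_forall_le_add_of_forall_add_le {u : ℕ → ℝ≥0∞} {a c : ℝ≥0∞}
    (hu : u 0 ≠ ∞) (hc : c ≠ ∞) (N : ℕ) (hup : ∀ t, u (t + 1) ≤ u t + c)
    (hdown : ∀ t ≥ N, u (t + 1) + a ≤ u t) : a = 0 := by
  have hfin : ∀ t, u t ≤ u 0 + t * c := fun t => by
    induction t with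
    | zero => simp
    | succ t ih =>
      calc u (t + 1) ≤ u 0 + t * c + c := (hup t).trans (by gcongr)
        _ = u 0 + (t + 1 : ℕ) * c := by push_cast; ring
  have hbound : ∀ j : ℕ, u (N + j) + j * a ≤ u N := fun j => by
    induction j with
    | zero => simp
    | succ j ih =>
      calc u (N + (j + 1)) + (j + 1 : ℕ) * a = u (N + j + 1) + a + j * a := by
            rw [← add_assoc]; push_cast; ring
        _ ≤ u N := (add_le_add_left (hdown _ (N.le_add_right j)) _).trans ih
  by_contra ha
  obtain ⟨n, hn⟩ := ENNReal.exists_nat_mul_gt ha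
    (ne_top_of_le_ne_top (by finiteness) (hfin N))
  exact (hn.trans_le (le_add_self.trans (hbound n))).false

theorem measure_eq_one_of_ae_mem {α : Type*} [MeasurableSpace α] {μ : Measure α}
    [IsProbabilityMeasure μ] {s : Set α} (hs : ∀ᵐ a ∂μ, a ∈ s) : μ s = 1 := by
  have hsc : μ sᶜ = 0 := ae_iff.1 hs
  exact le_antisymm prob_le_one (by simpa [hsc] using measure_univ_le_add_compl s (μ := μ))

theorem measurableSet_setOf_ae_mem {α β : Type*} [MeasurableSpace α] [MeasurableSpace β]
    {ν : Measure β} [SFinite ν] {S : Set (α × β)} (hS : MeasurableSet S) :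
    MeasurableSet {a | ∀ᵐ b ∂ν, (a, b) ∈ S} := by
  have : {a | ∀ᵐ b ∂ν, (a, b) ∈ S} = (fun a => ν (Prod.mk a ⁻¹' Sᶜ)) ⁻¹' {0} := by
    ext a
    exact ae_iff
  rw [this]
  exact measurable_measure_prodMk_left hS.compl (measurableSet_singleton 0)

theorem lintegral_ofReal_le_ofReal_add {W : Type*} [MeasurableSpace W] {d : Measure W}
    {f : W → ℝ} (hf : Integrable f d) (h0 : 0 ≤ᵐ[d] f) {v c : ℝ} (h : ∫ w, f w ∂d ≤ v + c) :
    ∫⁻ w, ENNReal.ofReal (f w) ∂d ≤ ENNReal.ofReal v + ENNReal.ofReal c := by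
  rw [← ofReal_integral_eq_lintegral_ofReal hf h0]
  exact (ENNReal.ofReal_le_ofReal h).trans ENNReal.ofReal_add_le

theorem lintegral_ofReal_add_le_ofReal {W : Type*} [MeasurableSpace W] {d : Measure W}
    {f : W → ℝ} (hf : Integrable f d) (h0 : 0 ≤ᵐ[d] f) {v ε : ℝ} (hε : 0 ≤ ε)
    (h : ∫ w, f w ∂d ≤ v - ε) :
    ∫⁻ w, ENNReal.ofReal (f w) ∂d + ENNReal.ofReal ε ≤ ENNReal.ofReal v := by
  rw [← ofReal_integral_eq_lintegral_ofReal hf h0,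
    ← ENNReal.ofReal_add (integral_nonneg_of_ae h0) hε]
  exact ENNReal.ofReal_le_ofReal (by linarith)

theorem exists_measurable_selection_of_fintype {α β : Type*} [MeasurableSpace α]
    [MeasurableSpace β] [Fintype β] {P : α → β → Prop} (hP : ∀ b, MeasurableSet {a | P a b})
    {g₀ : α → β} (hg₀ : Measurable g₀) :
    ∃ g : α → β, Measurable g ∧ (∀ a, g a = g₀ a ∨ P a (g a)) ∧ ∀ a, (∃ b, P a b) → P a (g a) := by
  classical
  suffices h : ∀ s : Finset β, ∃ g : α → β, Measurable g ∧ (∀ a, g a = g₀ a ∨ P a (g a)) ∧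
      ∀ a, (∃ b ∈ s, P a b) → P a (g a) by
    obtain ⟨g, hg, hg₀, hgP⟩ := h Finset.univ
    exact ⟨g, hg, hg₀, fun a ⟨b, hb⟩ => hgP a ⟨b, Finset.mem_univ b, hb⟩⟩
  intro s
  induction s using Finset.induction_on with
  | empty => exact ⟨g₀, hg₀, fun a => Or.inl rfl, by simp⟩
  | insert b s _ ih =>
    obtain ⟨g, hg, hg₀, hgP⟩ := ih
    refine ⟨{a | P a b}.piecewise (fun _ => b) g, Measurable.piecewise (hP b) measurable_const hg,
      fun a => ?_, ?_⟩
    · by_cases ha : P a b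
      · simp [ha]
      · simp [ha, hg₀ a]
    · rintro a ⟨b', hb', hab'⟩
      by_cases ha : P a b
      · simp [ha]
      · rw [piecewise_eq_of_notMem _ _ _ (by exact ha)]
        refine hgP a ⟨b', (Finset.mem_insert.1 hb').resolve_left ?_, hab'⟩
        rintro rfl
        exact ha hab'

theorem dependsOn_traj {Y W : Type*} {G : Y × W → Y} (y₀ : Y) (t : ℕ) :
    DependsOn (fun ω => traj G y₀ ω t) (Iio t) := by
  induction t with
  | zero => exact fun _ _ _ => rfl
  | succ t ih =>
    intro ω ω' h
    have hpast : traj G y₀ ω t = traj G y₀ ω' t := ih fun i hi => h i (Nat.lt_succ_of_lt hi)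
    simp only [traj, hpast, h t (Nat.lt_succ_self t)]

theorem dependsOn_forall_le_traj_mem {Y W : Type*} {G : Y × W → Y} (y₀ : Y) (B : ℕ → Set Y)
    (t : ℕ) : DependsOn (· ∈ {ω | ∀ s ≤ t, traj G y₀ ω s ∈ B s}) (Iio t) := fun ω ω' h => by
  refine propext (forall₂_congr fun s hs => ?_)
  rw [show traj G y₀ ω s = traj G y₀ ω' s from
    dependsOn_traj y₀ s fun i hi => h i (lt_of_lt_of_le hi hs)]

section Trajectory

variable {Y W : Type*} [MeasurableSpace Y] [MeasurableSpace W] (d : Measure W)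
  [IsProbabilityMeasure d] {G : Y × W → Y} (y₀ : Y)

local notation "ℙ∞" => Measure.infinitePi (fun _ : ℕ => d)

theorem measurable_traj (hG : Measurable G) (t : ℕ) : Measurable fun ω => traj G y₀ ω t := by
  induction t with
  | zero => exact measurable_const
  | succ t ih => exact hG.comp (ih.prodMk (measurable_pi_apply t))

theorem measurableSet_forall_le_traj_mem (hG : Measurable G) {B : ℕ → Set Y}
    (hB : ∀ s, MeasurableSet (B s)) (t : ℕ) :
    MeasurableSet {ω | ∀ s ≤ t, traj G y₀ ω s ∈ B s} :=
  measurableSet_setOfPred.2 (Measurable.forall fun s => measurable_const.imp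
    (measurableSet_setOfPred.1 (measurable_traj y₀ hG s (hB s))))

theorem setLIntegral_traj_succ (hG : Measurable G) {f : Y → ℝ≥0∞} (hf : Measurable f) {t : ℕ}
    {E : Set (ℕ → W)} (hE : MeasurableSet E) (hEt : DependsOn (· ∈ E) (Iio t)) :
    ∫⁻ ω in E, f (traj G y₀ ω (t + 1)) ∂ℙ∞ = ∫⁻ ω in E, ∫⁻ w, f (G (traj G y₀ ω t, w)) ∂d ∂ℙ∞ := by
  have hdep : DependsOn (fun ω w => E.indicator (fun ω => f (G (traj G y₀ ω t, w))) ω) (Iio t) := by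
    intro ω ω' h
    ext w
    have hωE : ω ∈ E ↔ ω' ∈ E := eq_iff_iff.1 (hEt h)
    dsimp only
    by_cases hω : ω ∈ E
    · rw [indicator_of_mem hω, indicator_of_mem (hωE.1 hω)]
      exact congrArg (fun y => f (G (y, w))) (dependsOn_traj y₀ t h)
    · rw [indicator_of_notMem hω, indicator_of_notMem (hωE.not.1 hω)]
  have hmeas : Measurable (Function.uncurry fun ω w =>
      E.indicator (fun ω => f (G (traj G y₀ ω t, w))) ω) :=
    (hf.comp (hG.comp (((measurable_traj y₀ hG t).comp measurable_fst).prodMk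
      measurable_snd))).indicator (measurable_fst hE)
  rw [← lintegral_indicator hE, ← lintegral_indicator hE]
  refine (lintegral_infinitePi_eval_of_dependsOn d hmeas hdep).trans (lintegral_congr fun ω => ?_)
  by_cases hω : ω ∈ E <;> simp [hω]

theorem ae_traj_succ_mem (hG : Measurable G) {R S : Set Y} (hR : MeasurableSet R)
    (hS : MeasurableSet S) (h : ∀ y ∈ R, ∀ᵐ w ∂d, G (y, w) ∈ S) :
    ∀ᵐ ω ∂ℙ∞, ∀ t, traj G y₀ ω t ∈ R → traj G y₀ ω (t + 1) ∈ S := by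
  refine ae_all_iff.2 fun t => ?_
  set E := {ω | traj G y₀ ω t ∈ R}
  have hE : MeasurableSet E := measurable_traj y₀ hG t hR
  have hEt : DependsOn (· ∈ E) (Iio t) := fun ω ω' h => by
    simp only [E, mem_ofPred_eq, show traj G y₀ ω t = traj G y₀ ω' t from dependsOn_traj y₀ t h]
  have hexit : ∫⁻ ω in E, Sᶜ.indicator 1 (traj G y₀ ω (t + 1)) ∂ℙ∞ = 0 := by
    rw [setLIntegral_traj_succ d y₀ hG (measurable_one.indicator hS.compl) hE hEt]
    refine (setLIntegral_congr_fun hE fun ω hω => ?_).trans lintegral_zero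
    refine (lintegral_congr_ae ((h _ hω).mono fun w hw => ?_)).trans lintegral_zero
    exact indicator_of_notMem (not_not.2 hw) _
  have hmeas : Measurable fun ω => Sᶜ.indicator (1 : Y → ℝ≥0∞) (traj G y₀ ω (t + 1)) :=
    (measurable_one.indicator hS.compl).comp (measurable_traj y₀ hG (t + 1))
  refine (ae_restrict_iff' hE).1 (((lintegral_eq_zero_iff hmeas).1 hexit).mono fun ω hω => ?_)
  simpa using hω

theorem setLIntegral_traj_succ_add_le (hG : Measurable G) {V : Y → ℝ≥0∞} (hV : Measurable V)
    {R : Set Y} {a b : ℝ≥0∞} (hR : ∀ y ∈ R, ∫⁻ w, V (G (y, w)) ∂d + a ≤ V y + b) {t : ℕ}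
    {E : Set (ℕ → W)} (hE : MeasurableSet E) (hEt : DependsOn (· ∈ E) (Iio t))
    (hER : ∀ ω ∈ E, traj G y₀ ω t ∈ R) :
    ∫⁻ ω in E, V (traj G y₀ ω (t + 1)) ∂ℙ∞ + a * ℙ∞ E
      ≤ ∫⁻ ω in E, V (traj G y₀ ω t) ∂ℙ∞ + b * ℙ∞ E := by
  rw [setLIntegral_traj_succ d y₀ hG hV hE hEt, ← setLIntegral_const, ← setLIntegral_const,
    ← lintegral_add_right _ measurable_const, ← lintegral_add_right _ measurable_const]
  exact setLIntegral_mono ((hV.comp (measurable_traj y₀ hG t)).add_const b)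
    fun ω hω => hR _ (hER ω hω)

theorem measure_forall_mem_eventually_notMem_eq_zero (hG : Measurable G) {V : Y → ℝ≥0∞}
    (hV : Measurable V) (hV₀ : V y₀ ≠ ∞) {R T : Set Y} (hR : MeasurableSet R)
    (hT : MeasurableSet T) {c ε : ℝ≥0∞} (hc : c ≠ ∞) (hε : ε ≠ 0)
    (hinc : ∀ y ∈ R, y ∈ T → ∫⁻ w, V (G (y, w)) ∂d ≤ V y + c)
    (hdec : ∀ y ∈ R, y ∉ T → ∫⁻ w, V (G (y, w)) ∂d + ε ≤ V y) (N : ℕ) :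
    ℙ∞ {ω | ∀ t, traj G y₀ ω t ∈ R ∧ (N ≤ t → traj G y₀ ω t ∉ T)} = 0 := by
  set B : ℕ → Set Y := fun s => {y | y ∈ R ∧ (N ≤ s → y ∉ T)}
  set A : ℕ → Set (ℕ → W) := fun t => {ω | ∀ s ≤ t, traj G y₀ ω s ∈ B s}
  set M : ℕ → ℝ≥0∞ := fun t => ∫⁻ ω in A t, V (traj G y₀ ω t) ∂ℙ∞
  have hA : ∀ t, MeasurableSet (A t) := measurableSet_forall_le_traj_mem y₀ hG fun s => by
    by_cases hs : N ≤ s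
    · convert hR.diff hT using 1
      ext y
      simp [B, hs]
    · convert hR using 1
      ext y
      simp [B, hs]
  have hAR : ∀ t, ∀ ω ∈ A t, traj G y₀ ω t ∈ R := fun t ω hω => (hω t le_rfl).1
  have hnext : ∀ t, M (t + 1) ≤ ∫⁻ ω in A t, V (traj G y₀ ω (t + 1)) ∂ℙ∞ := fun t =>
    lintegral_mono_set fun ω hω s hs => hω s (hs.trans t.le_succ)
  have hup : ∀ t, M (t + 1) ≤ M t + c := fun t => by
    have hstep : ∀ y ∈ R, ∫⁻ w, V (G (y, w)) ∂d + 0 ≤ V y + c := fun y hy => by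
      by_cases hyT : y ∈ T
      · simpa using hinc y hy hyT
      · exact (add_zero _).trans_le (le_self_add.trans (hdec y hy hyT) |>.trans le_self_add)
    calc M (t + 1) ≤ ∫⁻ ω in A t, V (traj G y₀ ω (t + 1)) ∂ℙ∞ := hnext t
      _ ≤ M t + c * ℙ∞ (A t) := by
        simpa using setLIntegral_traj_succ_add_le d y₀ hG hV hstep (hA t)
          (dependsOn_forall_le_traj_mem y₀ B t) (hAR t)
      _ ≤ M t + c := by gcongr; exact mul_le_of_le_one_right' prob_le_one
  have hdown : ∀ t ≥ N, M (t + 1) + ε * ℙ∞ (⋂ s, A s) ≤ M t := fun t ht => by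
    have hstep : ∀ y ∈ R \ T, ∫⁻ w, V (G (y, w)) ∂d + ε ≤ V y + 0 := fun y hy => by
      simpa using hdec y hy.1 hy.2
    calc M (t + 1) + ε * ℙ∞ (⋂ s, A s)
        ≤ ∫⁻ ω in A t, V (traj G y₀ ω (t + 1)) ∂ℙ∞ + ε * ℙ∞ (A t) := by
          gcongr
          exacts [hnext t, iInter_subset _ t]
      _ ≤ M t := by
        simpa using setLIntegral_traj_succ_add_le d y₀ hG hV hstep (hA t)
          (dependsOn_forall_le_traj_mem y₀ B t) fun ω hω => ⟨hAR t ω hω, (hω t le_rfl).2 ht⟩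
  have hM₀ : M 0 ≠ ∞ := by
    simpa [M, traj, setLIntegral_const] using ENNReal.mul_ne_top hV₀ (measure_ne_top _ _)
  have hzero := ENNReal.eq_zero_of_forall_le_add_of_forall_add_le hM₀ hc N hup hdown
  refine measure_mono_null (t := ⋂ s, A s) (fun ω hω => mem_iInter.2 fun t s _ => hω s) ?_
  exact (mul_eq_zero.1 hzero).resolve_left hε

theorem ae_infinite_mem_of_forall_mem (hG : Measurable G) {V : Y → ℝ≥0∞}
    (hV : Measurable V) (hV₀ : V y₀ ≠ ∞) {R T : Set Y} (hR : MeasurableSet R)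
    (hT : MeasurableSet T) {c ε : ℝ≥0∞} (hc : c ≠ ∞) (hε : ε ≠ 0)
    (hinc : ∀ y ∈ R, y ∈ T → ∫⁻ w, V (G (y, w)) ∂d ≤ V y + c)
    (hdec : ∀ y ∈ R, y ∉ T → ∫⁻ w, V (G (y, w)) ∂d + ε ≤ V y) :
    ∀ᵐ ω ∂ℙ∞, (∀ t, traj G y₀ ω t ∈ R) → {t | traj G y₀ ω t ∈ T}.Infinite := by
  have := ae_all_iff.2 fun N => measure_eq_zero_iff_ae_notMem.1
    (measure_forall_mem_eventually_notMem_eq_zero d y₀ hG hV hV₀ hR hT hc hε hinc hdec N)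
  filter_upwards [this] with ω hω hωR
  refine Set.infinite_of_forall_exists_gt fun N => ?_
  by_contra! hN
  exact hω (N + 1) fun t => ⟨hωR t, fun ht hT => (hN t hT).not_gt ht⟩

end Trajectory

theorem prodTraj_eq_traj {X W Q : Type*} (F : X × W → X) (πA : X × Q → Q) (x₀ : X) (qinit : Q)
    (ω : ℕ → W) :
    prodTraj F πA x₀ qinit ω =
      traj (fun p : (X × Q) × W => (F (p.1.1, p.2), πA p.1)) (x₀, qinit) ω := by
  funext t
  induction t with
  | zero => rfl
  | succ t ih => simp only [prodTraj, traj, ih]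

/-- The liveness half of (e)/(f) for the successor `q'` of `z`, with an `ℝ≥0∞`-valued certificate
`V`. Invariance is only asked almost surely, so that the set of such `z` is measurable. -/
def IsCertifiedSuccessor {X W Q A : Type*} [MeasurableSpace W] (d : Measure W) (F : X × W → X)
    (L : X → A) (Δ : Q → A → Set Q) (I : Set (X × Q)) (Acc : Set Q) (V : X × Q → ℝ≥0∞)
    (c ε : ℝ≥0∞) (z : X × Q) (q' : Q) : Prop :=
  q' ∈ Δ z.2 (L z.1) ∧ (∀ᵐ w ∂d, (F (z.1, w), q') ∈ I) ∧
    (z.2 ∈ Acc → ∫⁻ w, V (F (z.1, w), q') ∂d ≤ V z + c) ∧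
    (z.2 ∉ Acc → ∫⁻ w, V (F (z.1, w), q') ∂d + ε ≤ V z)

theorem measurableSet_isCertifiedSuccessor {X W Q A : Type*} [MeasurableSpace X]
    [MeasurableSpace W] [MeasurableSpace Q] [Countable Q] [DiscreteMeasurableSpace Q]
    [MeasurableSpace A] [DiscreteMeasurableSpace A] {d : Measure W} [SFinite d]
    {F : X × W → X} (hF : Measurable F) {L : X → A} (hL : Measurable L) (Δ : Q → A → Set Q)
    {I : Set (X × Q)} (hI : MeasurableSet I) (Acc : Set Q) {V : X × Q → ℝ≥0∞}
    (hV : Measurable V) (c ε : ℝ≥0∞) (q' : Q) :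
    MeasurableSet {z | IsCertifiedSuccessor d F L Δ I Acc V c ε z q'} := by
  refine measurableSet_setOfPred.2 (measurable_from_prod_countable_left fun q => ?_)
  have hlint : Measurable fun x => ∫⁻ w, V (F (x, w), q') ∂d :=
    (hV.comp (hF.prodMk measurable_const)).lintegral_prod_right'
  have hVq : Measurable fun x => V (x, q) := hV.comp (measurable_id.prodMk measurable_const)
  dsimp only [IsCertifiedSuccessor]
  refine ((Measurable.of_discrete (f := fun a => q' ∈ Δ q a)).comp hL).and
    ((measurableSet_setOfPred.1
      (measurableSet_setOf_ae_mem (ν := d) ((hF.prodMk measurable_const) hI))).and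
      ((measurable_const.imp ?_).and (measurable_const.imp ?_)))
  exacts [measurableSet_setOfPred.1 (measurableSet_le hlint (hVq.add_const c)),
    measurableSet_setOfPred.1 (measurableSet_le (hlint.add_const ε) hVq)]

theorem exists_isCertifiedSuccessor {X W Q A : Type*} [MeasurableSpace W] {d : Measure W}
    {F : X × W → X} {Δ : Q → A → Set Q} {Acc : Set Q} {L : X → A} {I : Set (X × Q)}
    {Vsafe Vlive : X × Q → ℝ} (hIntLive : ∀ x q', Integrable (fun w => Vlive (F (x, w), q')) d)
    {εS MS βS εL ML : ℝ} (hεL : 0 < εL)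
    (hc : ∀ x q, (x, q) ∈ I → q ∈ Qreject Δ Acc → 0 ≤ Vsafe (x, q))
    (hd : ∀ x q, (x, q) ∈ I → 0 ≤ Vlive (x, q))
    (he : ∀ x q, (x, q) ∈ I → q ∉ Acc ∪ Qreject Δ Acc → Vsafe (x, q) ≤ 0 →
      ∃ σ q', q' ∈ Δ q σ ∧ SafetyCond d F L I Vsafe εS MS βS x q σ q' ∧
        (∫ w, Vlive (F (x, w), q') ∂d) ≤ Vlive (x, q) - εL)
    (hf : ∀ x q, (x, q) ∈ I → q ∈ Acc → Vsafe (x, q) ≤ 0 →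
      ∃ σ q', q' ∈ Δ q σ ∧ SafetyCond d F L I Vsafe εS MS βS x q σ q' ∧
        (∫ w, Vlive (F (x, w), q') ∂d) ≤ Vlive (x, q) + ML)
    {y : X × Q} (hyI : y ∈ I) (hy : Vsafe y < 0) :
    ∃ q', IsCertifiedSuccessor d F L Δ I Acc (fun y => ENNReal.ofReal (Vlive y))
      (ENNReal.ofReal ML) (ENNReal.ofReal εL) y q' := by
  obtain ⟨x, q⟩ := y
  have hrej : q ∉ Qreject Δ Acc := fun h => (hc x q hyI h).not_gt hy
  by_cases hq : q ∈ Acc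
  · obtain ⟨σ, q', hq', ⟨rfl, hinv, -⟩, hlive⟩ := hf x q hyI hq hy.le
    have h0 : 0 ≤ᵐ[d] fun w => Vlive (F (x, w), q') := ae_of_all _ fun w => hd _ _ (hinv w)
    exact ⟨q', hq', ae_of_all _ hinv,
      fun _ => lintegral_ofReal_le_ofReal_add (hIntLive x q') h0 hlive, fun h => (h hq).elim⟩
  · obtain ⟨σ, q', hq', ⟨rfl, hinv, -⟩, hlive⟩ := he x q hyI (by simp [hq, hrej]) hy.le
    have h0 : 0 ≤ᵐ[d] fun w => Vlive (F (x, w), q') := ae_of_all _ fun w => hd _ _ (hinv w)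
    exact ⟨q', hq', ae_of_all _ hinv, fun h => (hq h).elim,
      fun _ => lintegral_ofReal_add_le_ofReal (hIntLive x q') h0 hεL.le hlive⟩

theorem exists_measurable_certified_controller {X W Q A : Type*} [MeasurableSpace X]
    [MeasurableSpace W] [Fintype Q] [MeasurableSpace Q] [DiscreteMeasurableSpace Q]
    [MeasurableSpace A] [DiscreteMeasurableSpace A] {d : Measure W} [SFinite d]
    {F : X × W → X} (hF : Measurable F) {L : X → A} (hL : Measurable L) {Δ : Q → A → Set Q}
    (hΔ : ∀ q σ, (Δ q σ).Nonempty) {I : Set (X × Q)} (hI : MeasurableSet I) {Acc : Set Q}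
    {V : X × Q → ℝ≥0∞} (hV : Measurable V) {c ε : ℝ≥0∞} {R : Set (X × Q)}
    (hR : ∀ y ∈ R, ∃ q', IsCertifiedSuccessor d F L Δ I Acc V c ε y q') :
    ∃ πA : X × Q → Q, Measurable πA ∧ (∀ x q, πA (x, q) ∈ Δ q (L x)) ∧
      ∀ y ∈ R, IsCertifiedSuccessor d F L Δ I Acc V c ε y (πA y) := by
  have hg₀ : Measurable fun z : X × Q => (hΔ z.2 (L z.1)).some :=
    measurable_from_prod_countable_left fun q =>
      (Measurable.of_discrete (f := fun a => (hΔ q a).some)).comp hL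
  obtain ⟨πA, hπA, hπA₀, hπAcert⟩ := exists_measurable_selection_of_fintype
    (measurableSet_isCertifiedSuccessor (d := d) hF hL Δ hI Acc hV c ε) hg₀
  exact ⟨πA, hπA, fun x q => (hπA₀ (x, q)).elim (fun h => h ▸ (hΔ q (L x)).some_mem) (·.1),
    fun y hy => hπAcert y (hR y hy)⟩

theorem ldbsm_almost_sure_liveness_or_exit_general
    {X W Q A : Type*}
    [MeasurableSpace X] [MeasurableSpace W]
    [Fintype Q] [MeasurableSpace Q] [DiscreteMeasurableSpace Q]
    [MeasurableSpace A] [DiscreteMeasurableSpace A]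
    (d : Measure W) [IsProbabilityMeasure d]
    (dInf : Measure (ℕ → W))
    (hdInf : ∀ (n : ℕ) (s : ℕ → Set W), (∀ i, MeasurableSet (s i)) →
      dInf {ω | ∀ i < n, ω i ∈ s i} = ∏ i ∈ Finset.range n, d (s i))
    (F : X × W → X) (hF : Measurable F)
    (qinit : Q) (Δ : Q → A → Set Q) (hΔ : ∀ q σ, (Δ q σ).Nonempty)
    (Acc : Set Q)
    (L : X → A) (hL : Measurable L)
    (Init : Set X) (I : Set (X × Q)) (hI : MeasurableSet I)
    (Vsafe Vlive : X × Q → ℝ)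
    (hVsafe : Measurable Vsafe) (hVlive : Measurable Vlive)
    (hIntLive : ∀ (x : X) (q' : Q), Integrable (fun w => Vlive (F (x, w), q')) d)
    (εS MS βS εL ML : ℝ)
    (hεL : 0 < εL)
    -- (a) Initial condition of the invariant
    (ha : ∀ x ∈ Init, (x, qinit) ∈ I)
    -- (c) Safety condition of the safety certificate
    (hc : ∀ x q, (x, q) ∈ I → q ∈ Qreject Δ Acc → 0 ≤ Vsafe (x, q))
    -- (d) Non-negativity condition of the liveness certificate
    (hd : ∀ x q, (x, q) ∈ I → 0 ≤ Vlive (x, q))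
    -- (e) Strict expected decrease of the liveness certificate
    (he : ∀ x q, (x, q) ∈ I → q ∉ Acc ∪ Qreject Δ Acc → Vsafe (x, q) ≤ 0 →
      ∃ σ q', q' ∈ Δ q σ ∧ SafetyCond d F L I Vsafe εS MS βS x q σ q' ∧
        (∫ w, Vlive (F (x, w), q') ∂d) ≤ Vlive (x, q) - εL)
    -- (f) Bounded expected increase of the liveness certificate
    (hf : ∀ x q, (x, q) ∈ I → q ∈ Acc → Vsafe (x, q) ≤ 0 →
      ∃ σ q', q' ∈ Δ q σ ∧ SafetyCond d F L I Vsafe εS MS βS x q σ q' ∧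
        (∫ w, Vlive (F (x, w), q') ∂d) ≤ Vlive (x, q) + ML) :
    ∃ πA : X × Q → Q, Measurable πA ∧ (∀ x q, πA (x, q) ∈ Δ q (L x)) ∧
      ∀ x₀ ∈ Init,
        dInf {ω | {t | (prodTraj F πA x₀ qinit ω t).2 ∈ Acc}.Infinite ∨
          ∃ t, 0 ≤ Vsafe (prodTraj F πA x₀ qinit ω t)} = 1 := by
  obtain rfl := eq_infinitePi_of_forall_range d hdInf
  have hV : Measurable fun y => ENNReal.ofReal (Vlive y) := ENNReal.measurable_ofReal.comp hVlive
  obtain ⟨πA, hπA, hπAΔ, hcert⟩ := exists_measurable_certified_controller (d := d) hF hL hΔ hI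
    hV (R := I ∩ {y | Vsafe y < 0}) fun y hy =>
      exists_isCertifiedSuccessor hIntLive hεL hc hd he hf hy.1 hy.2
  refine ⟨πA, hπA, hπAΔ, fun x₀ hx₀ => ?_⟩
  set G : (X × Q) × W → X × Q := fun p => (F (p.1.1, p.2), πA p.1)
  have hG : Measurable G := (hF.comp ((measurable_fst.comp measurable_fst).prodMk
    measurable_snd)).prodMk (hπA.comp measurable_fst)
  have hR : MeasurableSet (I ∩ {y | Vsafe y < 0}) :=
    hI.inter (measurableSet_lt hVsafe measurable_const)
  have hlive := ae_infinite_mem_of_forall_mem d (x₀, qinit) hG hV ENNReal.ofReal_ne_top hR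
    (measurable_snd (MeasurableSet.of_discrete (s := Acc))) ENNReal.ofReal_ne_top
    (ENNReal.ofReal_pos.2 hεL).ne' (fun y hy => (hcert y hy).2.2.1) fun y hy => (hcert y hy).2.2.2
  have hstay := ae_traj_succ_mem d (x₀, qinit) hG hR hI fun y hy => (hcert y hy).2.1
  refine measure_eq_one_of_ae_mem ?_
  filter_upwards [hlive, hstay] with ω hlive hstay
  rw [prodTraj_eq_traj]
  by_cases hsafe : ∃ t, 0 ≤ Vsafe (traj G (x₀, qinit) ω t)
  · exact Or.inr hsafe
  simp only [not_exists, not_le] at hsafe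
  refine Or.inl (hlive fun t => ?_)
  induction t with
  | zero => exact ⟨ha x₀ hx₀, hsafe 0⟩
  | succ t ih => exact ⟨hstay t ih, hsafe (t + 1)⟩

theorem ldbsm_almost_sure_liveness_or_exit
    {X W Q A : Type*}
    [MeasurableSpace X] [MeasurableSpace W]
    [Fintype Q] [MeasurableSpace Q] [DiscreteMeasurableSpace Q]
    [Fintype A] [MeasurableSpace A] [DiscreteMeasurableSpace A]
    (d : Measure W) [IsProbabilityMeasure d]
    (dInf : Measure (ℕ → W)) [IsProbabilityMeasure dInf]
    (hdInf : ∀ (n : ℕ) (s : ℕ → Set W), (∀ i, MeasurableSet (s i)) →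
      dInf {ω | ∀ i < n, ω i ∈ s i} = ∏ i ∈ Finset.range n, d (s i))
    (F : X × W → X) (hF : Measurable F)
    (qinit : Q) (Δ : Q → A → Set Q) (hΔ : ∀ q σ, (Δ q σ).Nonempty)
    (Acc : Set Q)
    (L : X → A) (hL : Measurable L)
    (Init : Set X) (I : Set (X × Q)) (hI : MeasurableSet I)
    (Vsafe Vlive : X × Q → ℝ)
    (hVsafe : Measurable Vsafe) (hVlive : Measurable Vlive)
    (hIntSafe : ∀ (x : X) (q' : Q), Integrable (fun w => Vsafe (F (x, w), q')) d)
    (hIntLive : ∀ (x : X) (q' : Q), Integrable (fun w => Vlive (F (x, w), q')) d)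
    (ηS εS MS βS εL ML : ℝ)
    (hηS : ηS ≤ 0) (hεS : 0 < εS) (hMS : 0 < MS) (hεL : 0 < εL) (hML : 0 < ML)
    -- (a) Initial condition of the invariant
    (ha : ∀ x ∈ Init, (x, qinit) ∈ I)
    -- (b) Initial condition of the safety certificate
    (hb : ∀ x ∈ Init, Vsafe (x, qinit) ≤ ηS)
    -- (c) Safety condition of the safety certificate
    (hc : ∀ x q, (x, q) ∈ I → q ∈ Qreject Δ Acc → 0 ≤ Vsafe (x, q))
    -- (d) Non-negativity condition of the liveness certificate
    (hd : ∀ x q, (x, q) ∈ I → 0 ≤ Vlive (x, q))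
    -- (e) Strict expected decrease of the liveness certificate
    (he : ∀ x q, (x, q) ∈ I → q ∉ Acc ∪ Qreject Δ Acc → Vsafe (x, q) ≤ 0 →
      ∃ σ q', q' ∈ Δ q σ ∧ SafetyCond d F L I Vsafe εS MS βS x q σ q' ∧
        (∫ w, Vlive (F (x, w), q') ∂d) ≤ Vlive (x, q) - εL)
    -- (f) Bounded expected increase of the liveness certificate
    (hf : ∀ x q, (x, q) ∈ I → q ∈ Acc → Vsafe (x, q) ≤ 0 →
      ∃ σ q', q' ∈ Δ q σ ∧ SafetyCond d F L I Vsafe εS MS βS x q σ q' ∧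
        (∫ w, Vlive (F (x, w), q') ∂d) ≤ Vlive (x, q) + ML) :
    ∃ πA : X × Q → Q, Measurable πA ∧ (∀ x q, πA (x, q) ∈ Δ q (L x)) ∧
      ∀ x₀ ∈ Init,
        dInf {ω | {t | (prodTraj F πA x₀ qinit ω t).2 ∈ Acc}.Infinite ∨
          ∃ t, 0 ≤ Vsafe (prodTraj F πA x₀ qinit ω t)} = 1 :=
  ldbsm_almost_sure_liveness_or_exit_general d dInf hdInf F hF qinit Δ hΔ Acc L hL Init I hI Vsafe
    Vlive hVsafe hVlive hIntLive εS MS βS εL ML hεL ha hc hd he hf
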